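/- arXiv:1703.09331 — 2 statements merged into one kernel-verified Lean document; each statement's English description precedes it below -/
import Mathlib

section
/- If A ⊆ ℤ^n, Nb(A) has dimension d, and a ∈ A, then for each orthant P of ℝ^n, a has only finitely many A-neighbors b with b − a ∈ P. -/
/-!
Map each neighbor `b` of `a` in the orthant `a + P` to the point `ε ⊙ (b - a)` of `ℕ^n`. If
`c ≤_P b` are two such neighbors, then `c` lies coordinatewise below `a ∨ b`, so the points of that
orthant lying `≤_P b`, together with `a`, have join `a ∨ b` and form a simplex of `Nb(A)`; the
dimension bound leaves at most `d + 1` of them. By Dickson's lemma, a subset of `ℕ^n` in which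
every element has a bounded number of elements below it is finite.
-/

/-- The coordinatewise supremum of `B ⊆ ℝ^n`, valued in `(ℝ ∪ {±∞})^n`. -/
noncomputable def vsup {n : ℕ} (B : Set (Fin n → ℝ)) : Fin n → EReal :=
  fun i => ⨆ b ∈ B, ((b i : ℝ) : EReal)

/-- `B` is a simplex of the neighbor complex of `A`. -/
def Nb {n : ℕ} (A B : Set (Fin n → ℝ)) : Prop :=
  B ⊆ A ∧ ¬ ∃ a ∈ A, ∀ i, ((a i : ℝ) : EReal) < vsup B i

open Set

theorem Set.finite_of_forall_encard_le_of_wellQuasiOrderedLE {α β : Type*} [Preorder β]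
    [WellQuasiOrderedLE β] {S : Set α} (f : α → β) (k : ℕ)
    (h : ∀ x ∈ S, {y ∈ S | f y ≤ f x}.encard ≤ k) : S.Finite := by
  by_contra hS
  let e := Set.Infinite.natEmbedding S hS
  obtain ⟨g, hg⟩ := wellQuasiOrdered_le.exists_monotone_subseq (fun m => f (e m))
  set chain : ℕ → α := fun m => e (g m)
  have hchain : chain.Injective := fun m m' hm => g.injective (e.injective (Subtype.ext hm))
  have hsub : chain '' {m | m < k + 1} ⊆ {y ∈ S | f y ≤ f (chain k)} := by
    rintro _ ⟨m, hm, rfl⟩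
    exact ⟨(e (g m)).2, hg m k (Nat.lt_succ_iff.mp hm)⟩
  have hcard := (encard_le_encard hsub).trans (h _ (e (g k)).2)
  rw [hchain.encard_image, Nat.encard_range] at hcard
  exact absurd hcard (by norm_cast; omega)

theorem vsup_le_vsup {n : ℕ} {B C : Set (Fin n → ℝ)}
    (h : ∀ x ∈ B, ∀ i, ∃ y ∈ C, x i ≤ y i) : vsup B ≤ vsup C := fun i =>
  iSup₂_le fun x hx => by
    obtain ⟨y, hy, hxy⟩ := h x hx i
    exact (EReal.coe_le_coe_iff.mpr hxy).trans
      (le_biSup (fun z : Fin n → ℝ => ((z i : ℝ) : EReal)) hy)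

theorem Nb.of_vsup_le {n : ℕ} {A B C : Set (Fin n → ℝ)} (hC : Nb A C) (hBA : B ⊆ A)
    (hBC : vsup B ≤ vsup C) : Nb A B :=
  ⟨hBA, fun ⟨c, hcA, hc⟩ => hC.2 ⟨c, hcA, fun i => (hc i).trans_le (hBC i)⟩⟩

theorem le_or_le_of_sign_mul_le {ε a b c : ℝ} (hε : ε = 1 ∨ ε = -1) (hc : 0 ≤ ε * (c - a))
    (hcb : ε * (c - a) ≤ ε * (b - a)) : c ≤ a ∨ c ≤ b := by
  rcases hε with rfl | rfl
  · right; linarith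
  · left; linarith

theorem le_of_natFloor_le_natFloor {x y : ℝ} (hx : ∃ m : ℕ, x = m) (hy : 0 ≤ y)
    (hxy : ⌊x⌋₊ ≤ ⌊y⌋₊) : x ≤ y := by
  obtain ⟨m, rfl⟩ := hx
  rwa [Nat.floor_natCast, Nat.le_floor_iff hy] at hxy

theorem exists_nat_eq_sign_mul_sub {ε a b : ℝ} (hε : ε = 1 ∨ ε = -1) (ha : ∃ m : ℤ, a = m)
    (hb : ∃ m : ℤ, b = m) (h : 0 ≤ ε * (b - a)) : ∃ m : ℕ, ε * (b - a) = m := by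
  obtain ⟨z, hz⟩ : ∃ z : ℤ, ε * (b - a) = z := by
    obtain ⟨ma, rfl⟩ := ha
    obtain ⟨mb, rfl⟩ := hb
    rcases hε with rfl | rfl
    · exact ⟨mb - ma, by push_cast; ring⟩
    · exact ⟨ma - mb, by push_cast; ring⟩
  obtain ⟨m, rfl⟩ := Int.eq_ofNat_of_zero_le (Int.cast_nonneg_iff.mp (hz ▸ h))
  exact ⟨m, by simp [hz]⟩

theorem stmt_7 (n d : ℕ) (A : Set (Fin n → ℝ))
    (ε : Fin n → ℝ) (hε : ∀ i, ε i = 1 ∨ ε i = -1)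
    (hint : ∀ a ∈ A, ∀ i, ∃ m : ℤ, a i = (m : ℝ))
    (hdim : (∀ B, Nb A B → B.Finite ∧ B.ncard ≤ d + 1) ∧
            (∃ B, Nb A B ∧ B.Finite ∧ B.ncard = d + 1))
    (a : Fin n → ℝ) (ha : a ∈ A) :
    {b ∈ A | Nb A {a, b} ∧ ∀ i, 0 ≤ ε i * (b i - a i)}.Finite := by
  set S := {b ∈ A | Nb A {a, b} ∧ ∀ i, 0 ≤ ε i * (b i - a i)}
  set ψ : (Fin n → ℝ) → Fin n → ℕ := fun b i => ⌊ε i * (b i - a i)⌋₊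
  refine finite_of_forall_encard_le_of_wellQuasiOrderedLE ψ (d + 1) fun b hb => ?_
  set D := {c ∈ S | ψ c ≤ ψ b}
  have hbelow : ∀ c ∈ D, ∀ i, c i ≤ a i ∨ c i ≤ b i := fun c ⟨hc, hcb⟩ i =>
    le_or_le_of_sign_mul_le (hε i) (hc.2.2 i) <| le_of_natFloor_le_natFloor
      (exists_nat_eq_sign_mul_sub (hε i) (hint a ha i) (hint c hc.1 i) (hc.2.2 i))
      (hb.2.2 i) (hcb i)
  have hNb : Nb A (insert a D) := by
    refine hb.2.1.of_vsup_le (insert_subset ha fun c hc => hc.1.1) (vsup_le_vsup ?_)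
    rintro c (rfl | hc) i
    · exact ⟨c, mem_insert c _, le_rfl⟩
    · rcases hbelow c hc i with h | h
      · exact ⟨a, mem_insert a _, h⟩
      · exact ⟨b, mem_insert_of_mem a rfl, h⟩
  obtain ⟨hfin, hcard⟩ := hdim.1 _ hNb
  calc D.encard ≤ (insert a D).encard := encard_le_encard (subset_insert a D)
    _ = (insert a D).ncard := hfin.cast_ncard_eq.symm
    _ ≤ (d + 1 : ℕ) := by exact_mod_cast hcard
end

section
/- Let a₀ = (0,0,1) and a_i = (i, 1/i, (i−1)/i) for i ≥ 1, and A = {a₀, a₁, a₂, …} ⊆ ℝ³. Then for every i ≥ 1, {a₀, a_i} ∈ Nb(A); hence a₀ has infinitely many A-neighbors and Nb(A) is not locally finite. -/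
/-- `a 0 = (0,0,1)` and `a i = (i, 1/i, (i-1)/i)` for `i ≥ 1`. -/
noncomputable def seqA : ℕ → (Fin 3 → ℝ) := fun i =>
  if i = 0 then ![0, 0, 1] else ![(i : ℝ), 1 / (i : ℝ), ((i : ℝ) - 1) / (i : ℝ)]

/-! `{a₀, aᵢ}` is a neighbor pair because the points `aₖ` with `k ≥ 1` form an antichain in the
first two coordinates (`k` increases while `1/k` decreases), so none of them lies strictly below
`aᵢ ∨ a₀ = (i, 1/i, 1)` in both; and `a₀` itself has third coordinate `1`, the maximum.
The first coordinate of `aᵢ` is `i`, so these pairs are pairwise distinct. -/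

lemma vsup_pair {n : ℕ} (x y : Fin n → ℝ) (j : Fin n) :
    vsup {x, y} j = ((max (x j) (y j) : ℝ) : EReal) := by
  simp only [vsup, iSup_pair]
  exact (EReal.coe_strictMono.monotone.map_max).symm

lemma nb_pair_iff {n : ℕ} {A : Set (Fin n → ℝ)} {x y : Fin n → ℝ} :
    Nb A {x, y} ↔ x ∈ A ∧ y ∈ A ∧ ∀ a ∈ A, ∃ j, max (x j) (y j) ≤ a j := by
  simp only [Nb, Set.insert_subset_iff, Set.singleton_subset_iff, vsup_pair,
    EReal.coe_lt_coe_iff, not_exists, not_and, not_forall, not_lt, and_assoc]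

lemma seqA_zero : seqA 0 = ![0, 0, 1] := if_pos rfl

lemma seqA_of_ne_zero {i : ℕ} (hi : i ≠ 0) :
    seqA i = ![(i : ℝ), 1 / (i : ℝ), ((i : ℝ) - 1) / (i : ℝ)] := if_neg hi

lemma seqA_apply_zero (i : ℕ) : seqA i 0 = i := by
  rcases eq_or_ne i 0 with rfl | hi
  · simp [seqA_zero]
  · simp [seqA_of_ne_zero hi]

lemma seqA_injective : Function.Injective seqA := fun i k h => by
  simpa only [seqA_apply_zero, Nat.cast_inj] using congrFun h 0

lemma nb_seqA_zero_seqA {i : ℕ} (hi : i ≠ 0) : Nb (Set.range seqA) {seqA 0, seqA i} := by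
  have hi_pos : (0 : ℝ) < i := by positivity
  refine nb_pair_iff.mpr ⟨Set.mem_range_self 0, Set.mem_range_self i, ?_⟩
  rintro _ ⟨k, rfl⟩
  rcases eq_or_ne k 0 with rfl | hk
  · refine ⟨2, ?_⟩
    have : ((i : ℝ) - 1) / i ≤ 1 := (div_le_one hi_pos).mpr (by linarith)
    simpa [seqA_zero, seqA_of_ne_zero hi] using this
  · rcases le_total (i : ℝ) k with hik | hki
    · exact ⟨0, by simpa [seqA_zero, seqA_of_ne_zero hi, seqA_of_ne_zero hk] using hik⟩
    · refine ⟨1, ?_⟩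
      have : (1 : ℝ) / i ≤ 1 / k := one_div_le_one_div_of_le (by positivity) hki
      simpa [seqA_zero, seqA_of_ne_zero hi, seqA_of_ne_zero hk] using this

theorem stmt_10 :
    (∀ i : ℕ, 1 ≤ i → Nb (Set.range seqA) {seqA 0, seqA i}) ∧
    {b ∈ Set.range seqA | Nb (Set.range seqA) {seqA 0, b}}.Infinite := by
  have nb_of_one_le (i : ℕ) (hi : 1 ≤ i) : Nb (Set.range seqA) {seqA 0, seqA i} :=
    nb_seqA_zero_seqA (Nat.one_le_iff_ne_zero.mp hi)
  refine ⟨nb_of_one_le, ((Set.Ici_infinite 1).image seqA_injective.injOn).mono ?_⟩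
  rintro _ ⟨i, hi, rfl⟩
  exact ⟨Set.mem_range_self i, nb_of_one_le i hi⟩
end
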